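/- arXiv:1211.2376 — 6 statements merged into one kernel-verified Lean document; each statement's English description precedes it below -/
import Mathlib

section
/- Let $w_1, w_2 \geq 1$ be positive integers and let $0 < \beta < 1$ be real. Then the polynomial $(w_1+w_2)z_1^{w_1}z_2^{w_2} + \beta(w_1 z_1^{w_1} + w_2 z_2^{w_2})$ has no zeros $(z_1, z_2) \in \mathbb{C}^2$ with $|z_1| \geq 1$ and $|z_2| \geq 1$. -/
theorem stmt_0 (w₁ w₂ : ℕ) (hw₁ : 1 ≤ w₁) (hw₂ : 1 ≤ w₂) (β : ℝ)
    (hβ0 : 0 < β) (hβ1 : β < 1) (z₁ z₂ : ℂ) (hz₁ : 1 ≤ ‖z₁‖) (hz₂ : 1 ≤ ‖z₂‖) :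
    ((w₁ : ℂ) + w₂) * z₁ ^ w₁ * z₂ ^ w₂ +
      (β : ℂ) * ((w₁ : ℂ) * z₁ ^ w₁ + (w₂ : ℂ) * z₂ ^ w₂) ≠ 0 := by
  intro h
  set a := ‖z₁‖ ^ w₁ with ha
  set b := ‖z₂‖ ^ w₂ with hb
  have ha1 : 1 ≤ a := one_le_pow₀ hz₁
  have hb1 : 1 ≤ b := one_le_pow₀ hz₂
  have heq : ((w₁ : ℂ) + w₂) * z₁ ^ w₁ * z₂ ^ w₂ =
      -((β : ℂ) * ((w₁ : ℂ) * z₁ ^ w₁ + (w₂ : ℂ) * z₂ ^ w₂)) := by linear_combination h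
  have hn : ‖((w₁ : ℂ) + w₂) * z₁ ^ w₁ * z₂ ^ w₂‖ =
      ‖(β : ℂ) * ((w₁ : ℂ) * z₁ ^ w₁ + (w₂ : ℂ) * z₂ ^ w₂)‖ := by rw [heq, norm_neg]
  have hL : ‖((w₁ : ℂ) + w₂) * z₁ ^ w₁ * z₂ ^ w₂‖ = ((w₁ : ℝ) + w₂) * a * b := by
    have hc : ((w₁ : ℂ) + w₂) = ((w₁ + w₂ : ℕ) : ℂ) := by push_cast; ring
    rw [norm_mul, norm_mul, hc, Complex.norm_natCast, norm_pow, norm_pow, ha, hb]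
    push_cast; ring
  have hR : ‖(β : ℂ) * ((w₁ : ℂ) * z₁ ^ w₁ + (w₂ : ℂ) * z₂ ^ w₂)‖ ≤
      β * ((w₁ : ℝ) * a + (w₂ : ℝ) * b) := by
    rw [norm_mul]
    have : ‖((w₁ : ℂ) * z₁ ^ w₁ + (w₂ : ℂ) * z₂ ^ w₂)‖ ≤ (w₁ : ℝ) * a + (w₂ : ℝ) * b := by
      calc ‖((w₁ : ℂ) * z₁ ^ w₁ + (w₂ : ℂ) * z₂ ^ w₂)‖
          ≤ ‖(w₁ : ℂ) * z₁ ^ w₁‖ + ‖(w₂ : ℂ) * z₂ ^ w₂‖ := norm_add_le _ _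
        _ = (w₁ : ℝ) * a + (w₂ : ℝ) * b := by
            rw [norm_mul, norm_mul, Complex.norm_natCast, Complex.norm_natCast,
              norm_pow, norm_pow, ha, hb]
    have hβn : ‖(β : ℂ)‖ = β := by simp [abs_of_pos hβ0]
    rw [hβn]
    exact mul_le_mul_of_nonneg_left this hβ0.le
  have hw₁' : (1 : ℝ) ≤ w₁ := by exact_mod_cast hw₁
  have hw₂' : (1 : ℝ) ≤ w₂ := by exact_mod_cast hw₂
  have key : β * ((w₁ : ℝ) * a + (w₂ : ℝ) * b) < ((w₁ : ℝ) + w₂) * a * b := by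
    have h1 : (w₁ : ℝ) * a + (w₂ : ℝ) * b ≤ ((w₁ : ℝ) + w₂) * a * b := by
      nlinarith [mul_nonneg (mul_nonneg (by linarith : (0:ℝ) ≤ (w₁:ℝ)) (by linarith : (0:ℝ) ≤ a)) (by linarith : (0:ℝ) ≤ b - 1),
        mul_nonneg (mul_nonneg (by linarith : (0:ℝ) ≤ (w₂:ℝ)) (by linarith : (0:ℝ) ≤ b)) (by linarith : (0:ℝ) ≤ a - 1)]
    have hpos : 0 < (w₁ : ℝ) * a + (w₂ : ℝ) * b := by nlinarith
    nlinarith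
  rw [hL] at hn
  linarith
end

section
/- Let $w_1, w_2 \geq 1$ be positive integers and $0 < \beta < 1$. Then the weighted Ising partition function of a single edge, $Z_w(z_1, z_2) = z_1^{w_1}z_2^{w_2} + \beta(z_1^{w_1} + z_2^{w_2}) + 1$, has no zeros with $|z_1| \geq 1$ and $|z_2| > 1$. -/
/-!
Put `a = z₁ ^ w₁` and `b = z₂ ^ w₂`, so `‖a‖ ≥ 1` and `‖b‖ > 1`, and write the partition function as
`a (b + β) + (β b + 1)`. For real `|β| < 1` the identity
`|b + β|² - |β b + 1|² = (1 - β²)(|b|² - 1)` shows `|β b + 1| < |b + β| ≤ |a (b + β)|`,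
so the two terms cannot cancel.
-/

open Complex

lemma Complex.normSq_add_ofReal_sub_normSq_ofReal_mul_add_one (β : ℝ) (b : ℂ) :
    normSq (b + β) - normSq (β * b + 1) = (1 - β ^ 2) * (normSq b - 1) := by
  simp only [normSq_apply, add_re, add_im, mul_re, mul_im, ofReal_re, ofReal_im, one_re, one_im]
  ring

lemma Complex.norm_ofReal_mul_add_one_lt_norm_add_ofReal {β : ℝ} (hβ : |β| < 1) {b : ℂ}
    (hb : 1 < ‖b‖) : ‖(β : ℂ) * b + 1‖ < ‖b + β‖ := by
  have hβ2 : 0 < 1 - β ^ 2 := by nlinarith [abs_nonneg β, sq_abs β]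
  have hb2 : 0 < normSq b - 1 := by
    rw [← Complex.sq_norm]; nlinarith
  have key := normSq_add_ofReal_sub_normSq_ofReal_mul_add_one β b
  refine lt_of_pow_lt_pow_left₀ 2 (norm_nonneg _) ?_
  rw [Complex.sq_norm, Complex.sq_norm]
  nlinarith [mul_pos hβ2 hb2]

theorem Complex.mul_add_ofReal_mul_add_add_one_ne_zero {β : ℝ} (hβ : |β| < 1) {a b : ℂ}
    (ha : 1 ≤ ‖a‖) (hb : 1 < ‖b‖) : a * b + (β : ℂ) * (a + b) + 1 ≠ 0 := by
  intro h
  have hsplit : a * (b + β) = -((β : ℂ) * b + 1) := by linear_combination h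
  have hnorm : ‖(β : ℂ) * b + 1‖ = ‖a‖ * ‖b + β‖ := by
    rw [← norm_mul, hsplit, norm_neg]
  have hlt := norm_ofReal_mul_add_one_lt_norm_add_ofReal hβ hb
  have hle : ‖b + β‖ ≤ ‖a‖ * ‖b + β‖ := le_mul_of_one_le_left (norm_nonneg _) ha
  linarith

theorem stmt_1_general (w₁ w₂ : ℕ) (hw₂ : 1 ≤ w₂) (β : ℝ)
    (hβ0 : 0 < β) (hβ1 : β < 1) (z₁ z₂ : ℂ) (hz₁ : 1 ≤ ‖z₁‖) (hz₂ : 1 < ‖z₂‖) :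
    z₁ ^ w₁ * z₂ ^ w₂ + (β : ℂ) * (z₁ ^ w₁ + z₂ ^ w₂) + 1 ≠ 0 := by
  have hβ : |β| < 1 := abs_lt.mpr ⟨by linarith, hβ1⟩
  have ha : 1 ≤ ‖z₁ ^ w₁‖ := by
    rw [norm_pow]; exact one_le_pow₀ hz₁
  have hb : 1 < ‖z₂ ^ w₂‖ := by
    rw [norm_pow]; exact one_lt_pow₀ hz₂ (by omega)
  exact mul_add_ofReal_mul_add_add_one_ne_zero hβ ha hb

theorem stmt_1 (w₁ w₂ : ℕ) (hw₁ : 1 ≤ w₁) (hw₂ : 1 ≤ w₂) (β : ℝ)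
    (hβ0 : 0 < β) (hβ1 : β < 1) (z₁ z₂ : ℂ) (hz₁ : 1 ≤ ‖z₁‖) (hz₂ : 1 < ‖z₂‖) :
    z₁ ^ w₁ * z₂ ^ w₂ + (β : ℂ) * (z₁ ^ w₁ + z₂ ^ w₂) + 1 ≠ 0 :=
  stmt_1_general w₁ w₂ hw₂ β hβ0 hβ1 z₁ z₂ hz₁ hz₂
end

section
/- Let $A, B \in \mathbb{C}$ with $A \neq 0$ and $|B/A| \leq 1$, let $0 < \beta < 1$, let $z \in \mathbb{C}$ with $|z| \geq 1$, and let $w_0 \geq 1$ be an integer. Define $y = -\frac{B}{A}\cdot\frac{1 + \beta z^{w_0}}{\beta + z^{w_0}}$. If $|y| \geq 1$, then $|z| = 1$ and $|B/A| = 1$. -/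
/-! For real `β`, `‖β + u‖² - ‖1 + βu‖² = (1 - β²)(‖u‖² - 1)`. So when `|β| < 1` the map
`u ↦ (1 + βu)/(β + u)` sends `‖u‖ ≥ 1` into the closed unit disc and `‖u‖ > 1` into the open one.
Applied to `u = z ^ w₀`, the bound `‖y‖ ≥ 1` forces `‖z‖ = 1` and leaves no room for `‖B/A‖ < 1`. -/

lemma sq_norm_ofReal_add_sub_sq_norm_one_add_ofReal_mul (β : ℝ) (u : ℂ) :
    ‖(β : ℂ) + u‖ ^ 2 - ‖1 + (β : ℂ) * u‖ ^ 2 = (1 - β ^ 2) * (‖u‖ ^ 2 - 1) := by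
  simp only [Complex.sq_norm, Complex.normSq_apply, Complex.add_re, Complex.add_im,
    Complex.mul_re, Complex.mul_im, Complex.ofReal_re, Complex.ofReal_im, Complex.one_re,
    Complex.one_im]
  ring

lemma norm_one_add_ofReal_mul_le_norm_ofReal_add {β : ℝ} (hβ : |β| ≤ 1) {u : ℂ}
    (hu : 1 ≤ ‖u‖) : ‖1 + (β : ℂ) * u‖ ≤ ‖(β : ℂ) + u‖ := by
  have hβ2 : β ^ 2 ≤ 1 := sq_le_one_iff_abs_le_one β |>.2 hβ
  have hu2 : 1 ≤ ‖u‖ ^ 2 := one_le_pow₀ hu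
  have := sq_norm_ofReal_add_sub_sq_norm_one_add_ofReal_mul β u
  rw [← sq_le_sq₀ (norm_nonneg _) (norm_nonneg _)]
  nlinarith

lemma norm_one_add_ofReal_mul_lt_norm_ofReal_add {β : ℝ} (hβ : |β| < 1) {u : ℂ}
    (hu : 1 < ‖u‖) : ‖1 + (β : ℂ) * u‖ < ‖(β : ℂ) + u‖ := by
  have hβ2 : β ^ 2 < 1 := sq_lt_one_iff_abs_lt_one β |>.2 hβ
  have hu2 : 1 < ‖u‖ ^ 2 := one_lt_pow₀ hu two_ne_zero
  have := sq_norm_ofReal_add_sub_sq_norm_one_add_ofReal_mul β u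
  rw [← sq_lt_sq₀ (norm_nonneg _) (norm_nonneg _)]
  nlinarith

lemma norm_mobius_le_one {β : ℝ} (hβ : |β| ≤ 1) {u : ℂ} (hu : 1 ≤ ‖u‖) :
    ‖(1 + (β : ℂ) * u) / ((β : ℂ) + u)‖ ≤ 1 := by
  rw [norm_div]
  exact div_le_one_of_le₀ (norm_one_add_ofReal_mul_le_norm_ofReal_add hβ hu) (norm_nonneg _)

lemma norm_mobius_lt_one {β : ℝ} (hβ : |β| < 1) {u : ℂ} (hu : 1 < ‖u‖) :
    ‖(1 + (β : ℂ) * u) / ((β : ℂ) + u)‖ < 1 := by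
  have h := norm_one_add_ofReal_mul_lt_norm_ofReal_add hβ hu
  rw [norm_div]
  exact (div_lt_one ((norm_nonneg _).trans_lt h)).2 h

theorem stmt_5_general (A B : ℂ) (hBA : ‖B / A‖ ≤ 1) (β : ℝ)
    (hβ0 : 0 < β) (hβ1 : β < 1) (z : ℂ) (hz : 1 ≤ ‖z‖) (w₀ : ℕ) (hw₀ : 1 ≤ w₀)
    (y : ℂ) (hy : y = -(B / A) * ((1 + (β : ℂ) * z ^ w₀) / ((β : ℂ) + z ^ w₀)))
    (hy1 : 1 ≤ ‖y‖) :
    ‖z‖ = 1 ∧ ‖B / A‖ = 1 := by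
  have hβ : |β| < 1 := abs_lt.2 ⟨by linarith, hβ1⟩
  set r := ‖(1 + (β : ℂ) * z ^ w₀) / ((β : ℂ) + z ^ w₀)‖
  have hy_norm : ‖y‖ = ‖B / A‖ * r := by rw [hy, norm_mul, norm_neg]
  have hz1 : ‖z‖ = 1 := by
    refine le_antisymm (not_lt.1 fun hz_gt => ?_) hz
    have hr : r < 1 := norm_mobius_lt_one hβ (by rw [norm_pow]; exact one_lt_pow₀ hz_gt (by omega))
    have : ‖y‖ < 1 := calc
      ‖y‖ = ‖B / A‖ * r := hy_norm
      _ ≤ r := mul_le_of_le_one_left (norm_nonneg _) hBA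
      _ < 1 := hr
    linarith
  have hr : r ≤ 1 := norm_mobius_le_one hβ.le (by rw [norm_pow]; exact one_le_pow₀ hz)
  refine ⟨hz1, le_antisymm hBA ?_⟩
  calc
    1 ≤ ‖y‖ := hy1
    _ = ‖B / A‖ * r := hy_norm
    _ ≤ ‖B / A‖ := mul_le_of_le_one_right (norm_nonneg _) hr

theorem stmt_5 (A B : ℂ) (hA : A ≠ 0) (hBA : ‖B / A‖ ≤ 1) (β : ℝ)
    (hβ0 : 0 < β) (hβ1 : β < 1) (z : ℂ) (hz : 1 ≤ ‖z‖) (w₀ : ℕ) (hw₀ : 1 ≤ w₀)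
    (y : ℂ) (hy : y = -(B / A) * ((1 + (β : ℂ) * z ^ w₀) / ((β : ℂ) + z ^ w₀)))
    (hy1 : 1 ≤ ‖y‖) :
    ‖z‖ = 1 ∧ ‖B / A‖ = 1 :=
  stmt_5_general A B hBA β hβ0 hβ1 z hz w₀ hw₀ y hy hy1
end

section
/- Define sequences by $p_1^+ = \lambda$, $p_1^- = 1$, and for $k \geq 2$: $p_k^+ = \lambda(\beta p_{k-1}^- + p_{k-1}^+)$ and $p_k^- = \beta p_{k-1}^+ + p_{k-1}^-$, where $\lambda > 1$ and $0 < \beta < 1$. Let $r_k = p_k^+/p_k^-$. Then the sequence $(r_k)_{k \geq 1}$ is strictly increasing and $r_k > 1$ for all $k$. -/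
theorem stmt_10 (lam β : ℝ) (hlam : 1 < lam) (hβ0 : 0 < β) (hβ1 : β < 1)
    (pp pm : ℕ → ℝ) (hpp1 : pp 1 = lam) (hpm1 : pm 1 = 1)
    (hpp : ∀ k : ℕ, pp (k + 2) = lam * (β * pm (k + 1) + pp (k + 1)))
    (hpm : ∀ k : ℕ, pm (k + 2) = β * pp (k + 1) + pm (k + 1))
    (r : ℕ → ℝ) (hr : ∀ k : ℕ, r k = pp k / pm k) :
    ∀ k : ℕ, 1 ≤ k → r k < r (k + 1) ∧ 1 < r k := by
  have key : ∀ n : ℕ, 0 < pm (n + 1) ∧ pm (n + 1) < pp (n + 1) ∧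
      pp (n + 1) * pm (n + 2) < pp (n + 2) * pm (n + 1) := by
    intro n
    induction n with
    | zero =>
      refine ⟨by rw [hpm1]; norm_num, by rw [hpm1, hpp1]; linarith, ?_⟩
      rw [hpp 0, hpm 0, hpp1, hpm1]
      nlinarith [mul_pos (sub_pos.2 hβ1) (sub_pos.2 hlam), hlam.trans_le le_rfl]
    | succ n ih =>
      obtain ⟨h1, h2, h3⟩ := ih
      have hpppos : 0 < pp (n + 1) := lt_trans h1 h2
      have hpmpos : 0 < pm (n + 2) := by rw [hpm n]; positivity
      refine ⟨hpmpos, ?_, ?_⟩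
      · rw [hpm n, hpp n]
        nlinarith [mul_pos (sub_pos.2 hlam) (by positivity : (0:ℝ) < β * pm (n + 1) + pp (n + 1)),
          mul_pos (sub_pos.2 hβ1) (sub_pos.2 h2)]
      · have e1 := hpp (n + 1)
        have e2 := hpm (n + 1)
        have hdet : pp (n + 1 + 2) * pm (n + 1 + 1) - pp (n + 1 + 1) * pm (n + 1 + 2)
            = lam * (1 - β ^ 2) * (pp (n + 2) * pm (n + 1) - pp (n + 1) * pm (n + 2)) := by
          rw [e1, e2, hpp n, hpm n]; ring
        have hpos : 0 < lam * (1 - β ^ 2) := mul_pos (by linarith) (by nlinarith)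
        nlinarith [mul_pos hpos (sub_pos.2 h3)]
  intro k hk
  obtain ⟨n, rfl⟩ : ∃ n, k = n + 1 := ⟨k - 1, (Nat.succ_pred_eq_of_pos hk).symm⟩
  obtain ⟨h1, h2, h3⟩ := key n
  obtain ⟨h1', h2', -⟩ := key (n + 1)
  constructor
  · rw [hr, hr]
    rw [div_lt_div_iff₀ h1 h1']
    exact h3
  · rw [hr]
    exact (one_lt_div h1).2 h2
end

section
/- Let $G(k)$ be the graph obtained from a graph $G$ on $n$ vertices by attaching $k$ new pendant vertices to each vertex of $G$ (with unit edge weights). Then the monomer-dimer partition functions satisfy $Z_M(G(k),\lambda) = \lambda^{nk} Z_M(G, \lambda + k/\lambda)$ for all real $\lambda > 0$. -/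
/-- Boolean adjacency for the graph `G(k)` obtained from `G` by attaching `k` new
pendant vertices to each vertex of `G`. -/
def pendantAdjB {V : Type*} [DecidableEq V] (G : SimpleGraph V) [DecidableRel G.Adj]
    (k : ℕ) : V ⊕ V × Fin k → V ⊕ V × Fin k → Bool
  | Sum.inl u, Sum.inl v => decide (G.Adj u v)
  | Sum.inl v, Sum.inr (w, _) => decide (v = w)
  | Sum.inr (w, _), Sum.inl v => decide (v = w)
  | Sum.inr _, Sum.inr _ => false

/-- The graph `G(k)`: `G` with `k` new pendant vertices attached to each vertex. -/
def pendant {V : Type*} [DecidableEq V] (G : SimpleGraph V) [DecidableRel G.Adj]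
    (k : ℕ) : SimpleGraph (V ⊕ V × Fin k) where
  Adj a b := pendantAdjB G k a b = true
  symm := by
    constructor
    intro a b h
    rcases a with u | ⟨u, i⟩ <;> rcases b with v | ⟨v, j⟩ <;>
      simp_all [pendantAdjB, eq_comm, G.adj_comm]
  loopless := by
    constructor
    intro a
    rcases a with u | ⟨u, i⟩ <;> simp [pendantAdjB]

instance {V : Type*} [DecidableEq V] (G : SimpleGraph V) [DecidableRel G.Adj]
    (k : ℕ) : DecidableRel (pendant G k).Adj := fun _ _ =>
  inferInstanceAs (Decidable (_ = true))

/-- `M` is a matching of `G`: a set of edges of `G`, pairwise vertex-disjoint. -/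
def IsMatchingSet {V : Type*} [Fintype V] [DecidableEq V] (G : SimpleGraph V)
    [DecidableRel G.Adj] (M : Finset (Sym2 V)) : Prop :=
  M ⊆ G.edgeFinset ∧
    ∀ e ∈ M, ∀ f ∈ M, e ≠ f → ∀ v : V, ¬(v ∈ e ∧ v ∈ f)

instance {V : Type*} [Fintype V] [DecidableEq V] (G : SimpleGraph V)
    [DecidableRel G.Adj] : DecidablePred (IsMatchingSet G) := fun _ =>
  inferInstanceAs (Decidable (_ ∧ _))

/-- Monomer-dimer partition function with unit edge weights:
`Z_M(G, λ) = ∑_{matchings M} λ^{u(M)}` where `u(M)` is the number of uncovered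
vertices. -/
noncomputable def matchZ {V : Type*} [Fintype V] [DecidableEq V]
    (G : SimpleGraph V) [DecidableRel G.Adj] (lam : ℝ) : ℝ :=
  ∑ M ∈ Finset.univ.filter (IsMatchingSet G),
      lam ^ (Fintype.card V - 2 * M.card)

/-!
Restricting a matching of `G(k)` to the edges of `G` gives a matching `M` of `G`, and the
matchings of `G(k)` over `M` are obtained by choosing, independently for each vertex `v` left
uncovered by `M`, either nothing or one of the `k` edges from `v` to its pendant vertices.
Against the baseline `λ^(nk)` of all pendant vertices being uncovered, such a `v` then
contributes `λ` if it stays uncovered and `λ⁻¹` if it is matched, so the matchings over `M`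
contribute `λ^(nk) (λ + k/λ)^u(M)`.
-/

open Finset

section Sym2Sum

variable {α β : Type*}

lemma Sym2.inl_mem_map_inl {a : α} {f : Sym2 α} :
    (Sum.inl a : α ⊕ β) ∈ f.map Sum.inl ↔ a ∈ f := by
  simp [Sym2.mem_map]

lemma Sym2.inr_notMem_map_inl {b : β} {f : Sym2 α} :
    (Sum.inr b : α ⊕ β) ∉ f.map Sum.inl := by
  simp [Sym2.mem_map]

end Sym2Sum

section PendantGraph

variable {V : Type*} {k : ℕ}

def pendantEdge (v : V) (i : Fin k) : Sym2 (V ⊕ V × Fin k) := s(.inl v, .inr (v, i))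

lemma pendantEdge_inj {v v' : V} {i i' : Fin k} :
    pendantEdge v i = pendantEdge v' i' ↔ v = v' ∧ i = i' := by
  simp [pendantEdge]

lemma eq_of_mem_pendantEdge_of_mem_pendantEdge {w : V ⊕ V × Fin k} {v v' : V} {i i' : Fin k}
    (h : w ∈ pendantEdge v i) (h' : w ∈ pendantEdge v' i') : v = v' := by
  rcases Sym2.mem_iff.1 h with rfl | rfl <;> rcases Sym2.mem_iff.1 h' with h' | h' <;> simp_all

lemma mem_of_mem_map_inl_of_mem_pendantEdge {w : V ⊕ V × Fin k} {f : Sym2 V} {v : V} {i : Fin k}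
    (hf : w ∈ f.map Sum.inl) (hv : w ∈ pendantEdge v i) : v ∈ f := by
  rcases Sym2.mem_iff.1 hv with rfl | rfl
  · exact Sym2.inl_mem_map_inl.1 hf
  · exact absurd hf Sym2.inr_notMem_map_inl

lemma pendantEdge_ne_map_inl {v : V} {i : Fin k} {f : Sym2 V} : pendantEdge v i ≠ f.map Sum.inl :=
  fun h => Sym2.inr_notMem_map_inl (h ▸ Sym2.mem_mk_right _ _ : Sum.inr (v, i) ∈ f.map Sum.inl)

variable [DecidableEq V] {G : SimpleGraph V} [DecidableRel G.Adj]

lemma map_inl_mem_edgeSet_pendant {f : Sym2 V} :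
    f.map Sum.inl ∈ (pendant G k).edgeSet ↔ f ∈ G.edgeSet := by
  induction f using Sym2.ind with
  | _ u v => simp [pendant, pendantAdjB]

lemma pendantEdge_mem_edgeSet (v : V) (i : Fin k) : pendantEdge v i ∈ (pendant G k).edgeSet := by
  simp [pendantEdge, pendant, pendantAdjB]

lemma exists_map_inl_or_pendantEdge {e : Sym2 (V ⊕ V × Fin k)}
    (he : e ∈ (pendant G k).edgeSet) :
    (∃ f : Sym2 V, f.map Sum.inl = e) ∨ ∃ v i, pendantEdge v i = e := by
  induction e using Sym2.ind with
  | _ a b =>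
    rcases a with u | ⟨u, i⟩ <;> rcases b with w | ⟨w, j⟩
    · exact .inl ⟨s(u, w), rfl⟩
    · obtain rfl : u = w := by simpa [pendant, pendantAdjB] using he
      exact .inr ⟨u, j, rfl⟩
    · obtain rfl : w = u := by simpa [pendant, pendantAdjB] using he
      exact .inr ⟨w, i, Sym2.eq_swap⟩
    · simp [pendant, pendantAdjB] at he

end PendantGraph

section Matchings

variable {V : Type*} [Fintype V] [DecidableEq V] {G : SimpleGraph V} [DecidableRel G.Adj]
  {k : ℕ}

def coveredVertices (M : Finset (Sym2 V)) : Finset V := M.biUnion Sym2.toFinset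

def uncoveredVertices (M : Finset (Sym2 V)) : Finset V := (coveredVertices M)ᶜ

lemma mem_uncoveredVertices {M : Finset (Sym2 V)} {v : V} :
    v ∈ uncoveredVertices M ↔ ∀ e ∈ M, v ∉ e := by
  simp [uncoveredVertices, coveredVertices]

lemma card_coveredVertices {M : Finset (Sym2 V)} (hM : IsMatchingSet G M) :
    #(coveredVertices M) = 2 * #M := by
  rw [coveredVertices, card_biUnion, sum_const_nat (m := 2), mul_comm]
  · exact fun e he => Sym2.card_toFinset_of_not_isDiag e (G.not_isDiag_of_mem_edgeFinset (hM.1 he))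
  · exact fun e he f hf hef => disjoint_left.2 fun v hve hvf =>
      hM.2 e he f hf hef v ⟨Sym2.mem_toFinset.1 hve, Sym2.mem_toFinset.1 hvf⟩

lemma two_mul_card_le_card {M : Finset (Sym2 V)} (hM : IsMatchingSet G M) :
    2 * #M ≤ Fintype.card V :=
  card_coveredVertices hM ▸ card_le_univ _

lemma card_uncoveredVertices {M : Finset (Sym2 V)} (hM : IsMatchingSet G M) :
    #(uncoveredVertices M) = Fintype.card V - 2 * #M := by
  rw [uncoveredVertices, card_compl, card_coveredVertices hM]

def pendantExtension (M : Finset (Sym2 V)) (p : ∀ v ∈ uncoveredVertices M, Option (Fin k)) :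
    Finset (Sym2 (V ⊕ V × Fin k)) :=
  M.image (Sym2.map Sum.inl) ∪
    (uncoveredVertices M).attach.biUnion fun v => (p v.1 v.2).toFinset.image (pendantEdge v.1)

variable {M : Finset (Sym2 V)} {p : ∀ v ∈ uncoveredVertices M, Option (Fin k)}

lemma mem_pendantExtension {e : Sym2 (V ⊕ V × Fin k)} :
    e ∈ pendantExtension M p ↔ (∃ f ∈ M, f.map Sum.inl = e) ∨
      ∃ v hv i, p v hv = some i ∧ pendantEdge v i = e := by
  simp [pendantExtension]

lemma pendantEdge_mem_pendantExtension {v : V} {i : Fin k} :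
    pendantEdge v i ∈ pendantExtension M p ↔ ∃ hv, p v hv = some i := by
  simp [mem_pendantExtension, pendantEdge_ne_map_inl.symm, pendantEdge_inj]

lemma card_pendantExtension :
    #(pendantExtension M p) = #M + #{v ∈ (uncoveredVertices M).attach | (p v.1 v.2).isSome} := by
  rw [pendantExtension, card_union_of_disjoint, card_image_of_injective _
    (Sym2.map.injective Sum.inl_injective), card_biUnion, card_filter]
  · congr 1
    refine sum_congr rfl fun v _ => ?_
    cases p v.1 v.2 <;> simp
  · intro v _ w _ hvw
    refine disjoint_left.2 fun e hv hw => hvw ?_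
    simp only [mem_image, Option.mem_toFinset, Option.mem_def] at hv hw
    obtain ⟨i, -, rfl⟩ := hv
    obtain ⟨j, -, hj⟩ := hw
    exact Subtype.ext (pendantEdge_inj.1 hj).1.symm
  · refine disjoint_left.2 fun e he he' => ?_
    obtain ⟨f, -, rfl⟩ := mem_image.1 he
    simp only [mem_biUnion, mem_image] at he'
    obtain ⟨v, -, i, -, h⟩ := he'
    exact pendantEdge_ne_map_inl h

lemma pendantExtension_isMatching (hM : IsMatchingSet G M)
    (p : ∀ v ∈ uncoveredVertices M, Option (Fin k)) :
    IsMatchingSet (pendant G k) (pendantExtension M p) := by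
  refine ⟨fun e he => ?_, ?_⟩
  · rw [SimpleGraph.mem_edgeFinset]
    obtain ⟨f, hf, rfl⟩ | ⟨v, -, i, -, rfl⟩ := mem_pendantExtension.1 he
    · exact map_inl_mem_edgeSet_pendant.2 (SimpleGraph.mem_edgeFinset.1 (hM.1 hf))
    · exact pendantEdge_mem_edgeSet v i
  · rintro e he f hf hef w ⟨hwe, hwf⟩
    obtain ⟨a, ha, rfl⟩ | ⟨v, hv, i, hpv, rfl⟩ := mem_pendantExtension.1 he <;>
      obtain ⟨b, hb, rfl⟩ | ⟨v', hv', i', hpv', rfl⟩ := mem_pendantExtension.1 hf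
    · obtain ⟨x, hx, rfl⟩ := Sym2.mem_map.1 hwe
      exact hM.2 a ha b hb (ne_of_apply_ne _ hef) x ⟨hx, Sym2.inl_mem_map_inl.1 hwf⟩
    · exact mem_uncoveredVertices.1 hv' a ha (mem_of_mem_map_inl_of_mem_pendantEdge hwe hwf)
    · exact mem_uncoveredVertices.1 hv b hb (mem_of_mem_map_inl_of_mem_pendantEdge hwf hwe)
    · obtain rfl := eq_of_mem_pendantEdge_of_mem_pendantEdge hwe hwf
      obtain rfl : i = i' := Option.some.inj (hpv.symm.trans hpv')
      exact hef rfl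

def baseMatching (M' : Finset (Sym2 (V ⊕ V × Fin k))) : Finset (Sym2 V) :=
  {f | f.map Sum.inl ∈ M'}

lemma mem_baseMatching {M' : Finset (Sym2 (V ⊕ V × Fin k))} {f : Sym2 V} :
    f ∈ baseMatching M' ↔ f.map Sum.inl ∈ M' := by
  simp [baseMatching]

lemma baseMatching_isMatching {M' : Finset (Sym2 (V ⊕ V × Fin k))}
    (hM' : IsMatchingSet (pendant G k) M') : IsMatchingSet G (baseMatching M') := by
  refine ⟨fun f hf => ?_, fun e he f hf hef v ⟨hve, hvf⟩ => ?_⟩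
  · rw [mem_baseMatching] at hf
    exact SimpleGraph.mem_edgeFinset.2
      (map_inl_mem_edgeSet_pendant.1 (SimpleGraph.mem_edgeFinset.1 (hM'.1 hf)))
  · exact hM'.2 _ (mem_baseMatching.1 he) _ (mem_baseMatching.1 hf)
      (fun h => hef (Sym2.map.injective Sum.inl_injective h)) (.inl v)
      ⟨Sym2.inl_mem_map_inl.2 hve, Sym2.inl_mem_map_inl.2 hvf⟩

lemma baseMatching_pendantExtension : baseMatching (pendantExtension M p) = M := by
  ext f
  simp [mem_baseMatching, mem_pendantExtension, pendantEdge_ne_map_inl,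
    (Sym2.map.injective Sum.inl_injective).eq_iff]

noncomputable def pendantChoice (M' : Finset (Sym2 (V ⊕ V × Fin k))) (v : V) : Option (Fin k) :=
  if h : ∃ i, pendantEdge v i ∈ M' then some h.choose else none

lemma pendantChoice_eq_some_iff {M' : Finset (Sym2 (V ⊕ V × Fin k))}
    (hM' : IsMatchingSet (pendant G k) M') {v : V} {i : Fin k} :
    pendantChoice M' v = some i ↔ pendantEdge v i ∈ M' := by
  unfold pendantChoice
  split_ifs with h
  · rw [Option.some.injEq]
    refine ⟨fun hi => hi ▸ h.choose_spec, fun hi => ?_⟩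
    by_contra hne
    exact hM'.2 _ h.choose_spec _ hi (fun h' => hne (pendantEdge_inj.1 h').2) (.inl v)
      ⟨Sym2.mem_mk_left _ _, Sym2.mem_mk_left _ _⟩
  · simpa using fun hi => h ⟨i, hi⟩

lemma pendantChoice_pendantExtension (hM : IsMatchingSet G M) {v : V}
    (hv : v ∈ uncoveredVertices M) : pendantChoice (pendantExtension M p) v = p v hv :=
  Option.ext fun i => by
    rw [pendantChoice_eq_some_iff (pendantExtension_isMatching hM p),
      pendantEdge_mem_pendantExtension]
    exact ⟨fun ⟨_, h⟩ => h, fun h => ⟨hv, h⟩⟩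

lemma pendantExtension_pendantChoice {M' : Finset (Sym2 (V ⊕ V × Fin k))}
    (hM' : IsMatchingSet (pendant G k) M') :
    pendantExtension (baseMatching M') (fun v _ => pendantChoice M' v) = M' := by
  ext e
  rw [mem_pendantExtension]
  constructor
  · rintro (⟨f, hf, rfl⟩ | ⟨v, -, i, hi, rfl⟩)
    · exact mem_baseMatching.1 hf
    · exact (pendantChoice_eq_some_iff hM').1 hi
  · intro he
    obtain ⟨f, rfl⟩ | ⟨v, i, rfl⟩ :=
      exists_map_inl_or_pendantEdge (SimpleGraph.mem_edgeFinset.1 (hM'.1 he))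
    · exact .inl ⟨f, mem_baseMatching.2 he, rfl⟩
    · refine .inr ⟨v, mem_uncoveredVertices.2 fun f hf hvf => ?_, i,
        (pendantChoice_eq_some_iff hM').2 he, rfl⟩
      exact hM'.2 _ he _ (mem_baseMatching.1 hf) pendantEdge_ne_map_inl (.inl v)
        ⟨Sym2.mem_mk_left _ _, Sym2.inl_mem_map_inl.2 hvf⟩

noncomputable def pendantWeight (lam : ℝ) (o : Option (Fin k)) : ℝ :=
  if o.isSome then lam⁻¹ else lam

lemma sum_pendantWeight (lam : ℝ) :
    ∑ o : Option (Fin k), pendantWeight lam o = lam + k / lam := by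
  simp [pendantWeight, Fintype.sum_option, div_eq_mul_inv]

lemma pow_card_sub_card_pendantExtension {lam : ℝ} (hlam : lam ≠ 0) (hM : IsMatchingSet G M) :
    lam ^ (Fintype.card (V ⊕ V × Fin k) - 2 * #(pendantExtension M p)) =
      lam ^ (Fintype.card V * k) *
        ∏ v ∈ (uncoveredVertices M).attach, pendantWeight lam (p v.1 v.2) := by
  have hle := two_mul_card_le_card (pendantExtension_isMatching hM p)
  rw [card_pendantExtension] at hle ⊢
  set t := #{v ∈ (uncoveredVertices M).attach | (p v.1 v.2).isSome}
  have hU : #(uncoveredVertices M) = Fintype.card V - 2 * #M := card_uncoveredVertices hM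
  have hM2 : 2 * #M ≤ Fintype.card V := two_mul_card_le_card hM
  have htU : t ≤ #(uncoveredVertices M) := (card_filter_le _ _).trans card_attach.le
  have hprod : ∏ v ∈ (uncoveredVertices M).attach, pendantWeight lam (p v.1 v.2) =
      lam⁻¹ ^ t * lam ^ (#(uncoveredVertices M) - t) := by
    have hsplit := card_filter_add_card_filter_not (s := (uncoveredVertices M).attach)
      fun v => (p v.1 v.2).isSome
    rw [card_attach] at hsplit
    simp only [pendantWeight, prod_ite, prod_const]
    rw [← hsplit, Nat.add_sub_cancel_left]
  have hexp : Fintype.card (V ⊕ V × Fin k) - 2 * (#M + t) + t =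
      Fintype.card V * k + (#(uncoveredVertices M) - t) := by
    simp only [Fintype.card_sum, Fintype.card_prod, Fintype.card_fin] at hle ⊢
    omega
  calc lam ^ (Fintype.card (V ⊕ V × Fin k) - 2 * (#M + t))
      = lam ^ (Fintype.card (V ⊕ V × Fin k) - 2 * (#M + t) + t) * (lam ^ t)⁻¹ := by
        rw [pow_add, mul_inv_cancel_right₀ (pow_ne_zero _ hlam)]
    _ = _ := by rw [hexp, hprod, pow_add, inv_pow]; ring

lemma sum_baseMatching_fiber {lam : ℝ} (hlam : lam ≠ 0) (hM : IsMatchingSet G M) :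
    ∑ M' ∈ {M' | IsMatchingSet (pendant G k) M'} with baseMatching M' = M,
        lam ^ (Fintype.card (V ⊕ V × Fin k) - 2 * #M') =
      lam ^ (Fintype.card V * k) * (lam + k / lam) ^ #(uncoveredVertices M) := by
  rw [← sum_pendantWeight, ← prod_const, prod_sum, mul_sum]
  symm
  refine sum_nbij' (fun p => pendantExtension M p) (fun M' v _ => pendantChoice M' v)
    (fun p _ => ?_) (fun M' _ => ?_) (fun p _ => ?_) (fun M' hM' => ?_) (fun p _ => ?_)
  · simp [pendantExtension_isMatching hM p, baseMatching_pendantExtension]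
  · simp
  · exact funext fun v => funext fun hv => pendantChoice_pendantExtension hM hv
  · obtain ⟨hmatching, rfl⟩ := by simpa using hM'
    exact pendantExtension_pendantChoice hmatching
  · exact (pow_card_sub_card_pendantExtension hlam hM).symm

end Matchings

theorem stmt_18 {V : Type*} [Fintype V] [DecidableEq V] (G : SimpleGraph V)
    [DecidableRel G.Adj] (k : ℕ) (lam : ℝ) (hlam : 0 < lam) :
    matchZ (pendant G k) lam =
      lam ^ (Fintype.card V * k) * matchZ G (lam + (k : ℝ) / lam) := by
  rw [matchZ, matchZ, mul_sum, ← sum_fiberwise_of_maps_to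
    (g := baseMatching) (t := {M | IsMatchingSet G M}) fun M' hM' => by
      simpa using baseMatching_isMatching (mem_filter.1 hM').2]
  refine sum_congr rfl fun M hM => ?_
  rw [mem_filter] at hM
  rw [sum_baseMatching_fiber hlam.ne' hM.2, card_uncoveredVertices hM.2]
end

section
/- Let $G(k)$ be the graph obtained from a graph $G$ by attaching $k$ new pendant vertices to each vertex of $G$. Then the Ising partition functions satisfy $Z_I(G(k),\beta,\lambda) = (1 + \beta\lambda)^{nk}\, Z_I\left(G, \beta, \lambda\left(\frac{\beta+\lambda}{1+\beta\lambda}\right)^k\right)$, where $n$ is the number of vertices of $G$, $0 < \beta \le 1$, and $\lambda > 0$. -/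
/-- Number of edges of `G` whose endpoints receive different spins under `σ`
(each unordered edge corresponds to exactly two ordered pairs, hence the `/ 2`). -/
def disagreements {V : Type*} [Fintype V] (G : SimpleGraph V) [DecidableRel G.Adj]
    (σ : V → Bool) : ℕ :=
  (Finset.univ.filter (fun p : V × V => G.Adj p.1 p.2 ∧ σ p.1 ≠ σ p.2)).card / 2

/-- Number of vertices assigned spin `+` (encoded as `true`). -/
def plusCount {V : Type*} [Fintype V] (σ : V → Bool) : ℕ :=
  (Finset.univ.filter (fun v => σ v = true)).card

/-- The Ising partition function `Z_I(G, β, λ) = ∑_σ β^{d(σ)} λ^{p(σ)}`. -/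
noncomputable def isingZ {V : Type*} [Fintype V] [DecidableEq V] (G : SimpleGraph V)
    [DecidableRel G.Adj] (β lam : ℝ) : ℝ :=
  ∑ σ : V → Bool, β ^ disagreements G σ * lam ^ plusCount σ

/-!
Summing out the spins of the pendant vertices one vertex of `G` at a time: the `k` leaves at a
vertex of spin `+` contribute `(β + λ)^k`, those at a vertex of spin `-` contribute
`(1 + βλ)^k`. Pulling `(1 + βλ)^k` out of every vertex of `G` leaves the Ising sum of `G` with
the activity `λ ((β + λ)/(1 + βλ))^k`.
-/

open Finset

section Spins

variable {ι R : Type*} [Fintype ι] [CommSemiring R]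

lemma plusCount_sumElim {α : Type*} [Fintype α] (σ : ι → Bool) (τ : α → Bool) :
    plusCount (Sum.elim σ τ) = plusCount σ + plusCount τ := by
  simp only [plusCount, card_filter, Fintype.sum_sum_type, Sum.elim_inl, Sum.elim_inr]
  rfl

lemma pow_plusCount_eq_prod (σ : ι → Bool) (μ : R) :
    μ ^ plusCount σ = ∏ i, if σ i then μ else 1 := by
  rw [← prod_filter, prod_const, plusCount]

lemma sum_pow_card_ne_mul_pow_plusCount [DecidableEq ι] (s : ι → Bool) (β lam : R) :
    ∑ τ : ι → Bool, β ^ #{i | τ i ≠ s i} * lam ^ plusCount τ =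
      ∏ i, if s i then β + lam else 1 + β * lam := by
  have hterm : ∀ τ : ι → Bool, β ^ #{i | τ i ≠ s i} * lam ^ plusCount τ =
      ∏ i, (if τ i ≠ s i then β else 1) * (if τ i then lam else 1) := by
    intro τ
    rw [prod_mul_distrib, ← pow_plusCount_eq_prod, ← prod_filter, prod_const]
  have hspin_sum : ∀ i, (if s i then β + lam else 1 + β * lam) =
      ∑ b : Bool, (if b ≠ s i then β else 1) * (if b then lam else 1) := by
    intro i
    cases s i <;> simp [add_comm]
  simp only [hterm, hspin_sum, Fintype.prod_sum]

end Spins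

section Pendant

variable {V : Type*} [Fintype V] [DecidableEq V] (G : SimpleGraph V) [DecidableRel G.Adj]

lemma disagreements_pendant_sumElim (k : ℕ) (σ : V → Bool) (τ : V × Fin k → Bool) :
    disagreements (pendant G k) (Sum.elim σ τ) =
      disagreements G σ + #{x | τ x ≠ σ x.1} := by
  -- each pendant edge is counted twice among ordered pairs, like every edge of `G`
  have hcount : #{p : (V ⊕ V × Fin k) × (V ⊕ V × Fin k) |
      (pendant G k).Adj p.1 p.2 ∧ Sum.elim σ τ p.1 ≠ Sum.elim σ τ p.2} =
      #{p : V × V | G.Adj p.1 p.2 ∧ σ p.1 ≠ σ p.2} + 2 * #{x : V × Fin k | τ x ≠ σ x.1} := by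
    simp only [card_filter, Fintype.sum_prod_type, Fintype.sum_sum_type]
    simp only [pendant, pendantAdjB, decide_eq_true_eq, Sum.elim_inl, Sum.elim_inr, ne_eq, ite_and,
      ite_not, sum_ite_irrel, sum_const_zero, sum_ite_eq, sum_ite_eq', mem_univ, ↓reduceIte,
      ne_comm, Bool.false_eq_true, false_and, add_zero, two_mul]
    rw [sum_add_distrib]
    ring
  rw [disagreements, disagreements, hcount]
  omega

theorem isingZ_pendant (k : ℕ) (β lam : ℝ) :
    isingZ (pendant G k) β lam = ∑ σ : V → Bool,
      β ^ disagreements G σ * lam ^ plusCount σ *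
        ∏ v, (if σ v then β + lam else 1 + β * lam) ^ k := by
  rw [isingZ, ← (Equiv.sumArrowEquivProdArrow V (V × Fin k) Bool).symm.sum_comp,
    Fintype.sum_prod_type]
  refine sum_congr rfl fun σ _ => ?_
  have hfactor : ∀ τ : V × Fin k → Bool,
      β ^ (disagreements G σ + #{x | τ x ≠ σ x.1}) * lam ^ (plusCount σ + plusCount τ) =
        β ^ disagreements G σ * lam ^ plusCount σ * (β ^ #{x | τ x ≠ σ x.1} * lam ^ plusCount τ) :=
    fun τ => by ring
  simp only [Equiv.sumArrowEquivProdArrow, Equiv.coe_fn_symm_mk,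
    disagreements_pendant_sumElim, plusCount_sumElim, hfactor, ← mul_sum]
  simp only [sum_pow_card_ne_mul_pow_plusCount, Fintype.prod_prod_type]
  -- not `simp [prod_const]`: the decidability instance of each factor still mentions `(v, i).1`
  exact congrArg _ <| prod_congr rfl fun v _ =>
    Fin.prod_const k (if σ v then β + lam else 1 + β * lam)

end Pendant

theorem stmt_19_general {V : Type*} [Fintype V] [DecidableEq V] (G : SimpleGraph V)
    [DecidableRel G.Adj] (k : ℕ) (β lam : ℝ) (hβ0 : 0 < β)
    (hlam : 0 < lam) :
    isingZ (pendant G k) β lam =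
      (1 + β * lam) ^ (Fintype.card V * k) *
        isingZ G β (lam * ((β + lam) / (1 + β * lam)) ^ k) := by
  have hc : 1 + β * lam ≠ 0 := by positivity
  rw [isingZ_pendant, isingZ, mul_sum]
  refine sum_congr rfl fun σ _ => ?_
  have hweights : (1 + β * lam) ^ (Fintype.card V * k) *
      (((β + lam) / (1 + β * lam)) ^ k) ^ plusCount σ =
        ∏ v, (if σ v then β + lam else 1 + β * lam) ^ k := by
    rw [pow_plusCount_eq_prod, mul_comm _ k, pow_mul, ← card_univ, ← prod_const,
      ← prod_mul_distrib]
    refine prod_congr rfl fun v _ => ?_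
    cases σ v <;> simp [← mul_pow, mul_div_cancel₀ _ hc]
  rw [mul_pow, ← hweights]
  ring

theorem stmt_19 {V : Type*} [Fintype V] [DecidableEq V] (G : SimpleGraph V)
    [DecidableRel G.Adj] (k : ℕ) (β lam : ℝ) (hβ0 : 0 < β) (hβ1 : β ≤ 1)
    (hlam : 0 < lam) :
    isingZ (pendant G k) β lam =
      (1 + β * lam) ^ (Fintype.card V * k) *
        isingZ G β (lam * ((β + lam) / (1 + β * lam)) ^ k) :=
  stmt_19_general G k β lam hβ0 hlam
end
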